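/- The operation λ ↦ λ^1 = (λ_2-1, ..., λ_k-1, 0) (negatives replaced by 0) preserves the set 𝒫'(k,2n): if λ ∈ 𝒫'(k,2n) then λ^1 ∈ 𝒫'(k,2n). -/
import Mathlib


/-- The boundary word `D(λ)` of a partition `λ` in the `k × (N-k)` rectangle. -/
def bword (N k : ℕ) (lam : Fin k → ℕ) : Fin N → Bool :=
  fun i => decide (∃ j : Fin k, (i : ℕ) = N - k - lam j + (j : ℕ))

/-- The operation `λ ↦ λ¹ = (λ₂-1, …, λ_k-1, 0)` (negative entries truncated to 0). -/
def stepA (k : ℕ) (lam : Fin k → ℕ) : Fin k → ℕ :=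
  fun i => if h : (i : ℕ) + 1 < k then lam ⟨(i : ℕ) + 1, h⟩ - 1 else 0

/-- From the hypothesis `h3`, no two positions of ones in the boundary word sum to `2n-1`. -/
lemma key_lemma (n k : ℕ) (hk : k ≤ n) (lam : Fin k → ℕ)
    (h2 : ∀ i : Fin k, lam i ≤ 2 * n - k)
    (h3 : ∀ i : Fin (2 * n),
      ¬(bword (2 * n) k lam i = true ∧ bword (2 * n) k lam i.rev = true))
    (a b : ℕ) (ha : a < k) (hb : b < k) :
    (2 * n - k - lam ⟨a, ha⟩ + a) + (2 * n - k - lam ⟨b, hb⟩ + b) ≠ 2 * n - 1 := by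
  intro hab
  have hn : 1 ≤ n := le_trans (Nat.pos_of_ne_zero (by omega)) hk
  have ha2 := h2 ⟨a, ha⟩
  have hb2 := h2 ⟨b, hb⟩
  have hpa : (2 * n - k - lam ⟨a, ha⟩ + a) < 2 * n := by omega
  apply h3 ⟨2 * n - k - lam ⟨a, ha⟩ + a, hpa⟩
  constructor
  · simp only [bword, decide_eq_true_eq]
    exact ⟨⟨a, ha⟩, rfl⟩
  · simp only [bword, decide_eq_true_eq]
    refine ⟨⟨b, hb⟩, ?_⟩
    rw [Fin.val_rev]
    show 2 * n - (2 * n - k - lam ⟨a, ha⟩ + a + 1) = 2 * n - k - lam ⟨b, hb⟩ + b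
    omega

/-- the operation `λ ↦ λ¹` preserves `𝒫'(k,2n)`: if `λ` is a partition in the
`k × (2n-k)` rectangle whose boundary word never has ones in both positions `i` and `2n+1-i`,
then so is `λ¹`. -/
theorem stmt_16 (n k : ℕ) (hk : k ≤ n) (lam : Fin k → ℕ)
    (h1 : ∀ i j : Fin k, i ≤ j → lam j ≤ lam i)
    (h2 : ∀ i : Fin k, lam i ≤ 2 * n - k)
    (h3 : ∀ i : Fin (2 * n),
      ¬(bword (2 * n) k lam i = true ∧ bword (2 * n) k lam i.rev = true)) :
    (∀ i j : Fin k, i ≤ j → stepA k lam j ≤ stepA k lam i) ∧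
    (∀ i : Fin k, stepA k lam i ≤ 2 * n - k) ∧
    (∀ i : Fin (2 * n),
      ¬(bword (2 * n) k (stepA k lam) i = true ∧
        bword (2 * n) k (stepA k lam) i.rev = true)) := by
  refine ⟨?_, ?_, ?_⟩
  · -- monotonicity
    intro i j hij
    have hij' : (i : ℕ) ≤ (j : ℕ) := hij
    simp only [stepA]
    split_ifs with h h'
    · exact Nat.sub_le_sub_right (h1 _ _ (Fin.mk_le_mk.mpr (by omega))) 1
    · omega
    · exact Nat.zero_le _
    · exact Nat.zero_le _
  · -- bound
    intro i
    simp only [stepA]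
    split_ifs
    · exact le_trans (Nat.sub_le _ _) (h2 _)
    · exact Nat.zero_le _
  · -- boundary word condition
    intro i hi
    obtain ⟨ha, hb⟩ := hi
    simp only [bword, decide_eq_true_eq] at ha hb
    obtain ⟨j, hj⟩ := ha
    obtain ⟨j', hj'⟩ := hb
    rw [Fin.val_rev] at hj'
    have key := key_lemma n k hk lam h2 h3
    have hk0 : 0 < k := j.pos
    have hn : 1 ≤ n := le_trans hk0 hk
    have hiv := i.isLt
    have hjv := j.isLt
    have hj'v := j'.isLt
    have main : (2 * n - k - stepA k lam j + (j : ℕ)) +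
        (2 * n - k - stepA k lam j' + (j' : ℕ)) = 2 * n - 1 := by omega
    clear hiv hj hj' h3 i
    have form : ∀ a : Fin k, (∃ ha : (a : ℕ) + 1 < k, 1 ≤ lam ⟨(a : ℕ) + 1, ha⟩ ∧
        2 * n - k - stepA k lam a + (a : ℕ) =
          2 * n - k - lam ⟨(a : ℕ) + 1, ha⟩ + ((a : ℕ) + 1)) ∨
        ((∀ hb : (a : ℕ) + 1 < k, lam ⟨(a : ℕ) + 1, hb⟩ = 0) ∧
          2 * n - k - stepA k lam a + (a : ℕ) = 2 * n - k + (a : ℕ)) := by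
      intro a
      by_cases h : (a : ℕ) + 1 < k
      · by_cases h0 : lam ⟨(a : ℕ) + 1, h⟩ = 0
        · right
          refine ⟨fun hb => h0, ?_⟩
          simp only [stepA, dif_pos h, h0]
          omega
        · left
          refine ⟨h, by omega, ?_⟩
          have := h2 ⟨(a : ℕ) + 1, h⟩
          simp only [stepA, dif_pos h]
          omega
      · right
        refine ⟨fun hb => absurd hb h, ?_⟩
        simp only [stepA, dif_neg h]
        omega
    -- helper for the mixed case
    have mixed : ∀ a b : Fin k, ∀ hak : (a : ℕ) + 1 < k,
        1 ≤ lam ⟨(a : ℕ) + 1, hak⟩ →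
        (∀ hbk : (b : ℕ) + 1 < k, lam ⟨(b : ℕ) + 1, hbk⟩ = 0) →
        (2 * n - k - lam ⟨(a : ℕ) + 1, hak⟩ + ((a : ℕ) + 1)) +
          (2 * n - k + (b : ℕ)) ≠ 2 * n - 1 := by
      intro a b hak h1a h0b heq
      have haL := h2 ⟨(a : ℕ) + 1, hak⟩
      by_cases hc : (b : ℕ) + 1 < k
      · have hb0 : lam ⟨(b : ℕ) + 1, hc⟩ = 0 := h0b hc
        have h0L := h2 ⟨0, hk0⟩
        have hmono : lam ⟨(a : ℕ) + 1, hak⟩ ≤ lam ⟨0, hk0⟩ :=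
          h1 ⟨0, hk0⟩ ⟨(a : ℕ) + 1, hak⟩ (Fin.mk_le_mk.mpr (Nat.zero_le _))
        have hm : k - 1 - (2 * n - k - lam ⟨0, hk0⟩) < k := by omega
        set m : ℕ := k - 1 - (2 * n - k - lam ⟨0, hk0⟩) with hmdef
        have hmge : (b : ℕ) + 1 ≤ m := by omega
        have hm0 : lam ⟨m, hm⟩ = 0 := by
          have := h1 ⟨(b : ℕ) + 1, hc⟩ ⟨m, hm⟩ (Fin.mk_le_mk.mpr hmge)
          omega
        have K := key 0 m hk0 hm
        omega
      · -- b = k - 1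
        omega
    rcases form j with ⟨hjk, hj1, hje⟩ | ⟨hj0, hje⟩ <;>
      rcases form j' with ⟨hj'k, hj'1, hj'e⟩ | ⟨hj'0, hj'e⟩ <;>
      rw [hje, hj'e] at main
    · exact key ((j : ℕ) + 1) ((j' : ℕ) + 1) hjk hj'k main
    · exact mixed j j' hjk hj1 hj'0 main
    · exact mixed j' j hj'k hj'1 hj0 (by omega)
    · -- both B: sum ≥ 2(2n-k) ≥ 2n > 2n-1
      omega
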